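/- arXiv:1405.4052 — 5 statements merged into one kernel-verified Lean document; each statement's English description precedes it below -/
import Mathlib

section
/- Let {s_j} and {d_j} be two finite indexed families of vectors in a finite-dimensional complex inner product space. There exists a Hermitian (self-adjoint) linear operator Q satisfying Q s_j = d_j for all j if and only if (i) ⟨s_j, d_k⟩ = ⟨d_j, s_k⟩ for all j, k, and (ii) every linear relation among the s_j is also a linear relation among the d_j, i.e., for all complex coefficients α_j, ∑_j α_j s_j = 0 implies ∑_j α_j d_j = 0. -/
/-!
Condition (ii) says exactly that `∑ α j • s j ↦ ∑ α j • d j` is well defined, so some linear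
`T : E → E` sends each `s j` to `d j`; condition (i) then says `⟪T v, w⟫ = ⟪v, T w⟫` on
`V = span (range s)`. Any operator `T` that is symmetric on a subspace `V` agrees on `V` with the
symmetric operator `Q = T P + (T P)† (1 - P)`, where `P` is the orthogonal projection onto `V`: the
only terms of `⟪Q x, y⟫` and `⟪x, Q y⟫` that do not match are `⟪T P x, P y⟫` and `⟪P x, T P y⟫`,
which agree.
-/

open scoped InnerProductSpace

open Submodule

theorem LinearMap.exists_comp_eq_of_ker_le {K M N P : Type*} [DivisionRing K]
    [AddCommGroup M] [Module K M] [AddCommGroup N] [Module K N] [AddCommGroup P] [Module K P]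
    (φ : M →ₗ[K] N) (ψ : M →ₗ[K] P) (h : ker φ ≤ ker ψ) :
    ∃ g : N →ₗ[K] P, g ∘ₗ φ = ψ := by
  obtain ⟨ℓ, hℓ⟩ := ((ker φ).liftQ φ le_rfl).exists_leftInverse_of_injective
    (ker_liftQ_eq_bot _ _ _ le_rfl)
  refine ⟨(ker φ).liftQ ψ h ∘ₗ ℓ, LinearMap.ext fun x => ?_⟩
  have hx : ℓ (φ x) = (ker φ).mkQ x := LinearMap.congr_fun hℓ ((ker φ).mkQ x)
  simp [hx]

theorem exists_linearMap_apply_eq_of_forall_sum_smul_eq_zero {K N P ι : Type*} [DivisionRing K]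
    [AddCommGroup N] [Module K N] [AddCommGroup P] [Module K P] [Fintype ι] {s : ι → N}
    {d : ι → P} (h : ∀ α : ι → K, ∑ j, α j • s j = 0 → ∑ j, α j • d j = 0) :
    ∃ g : N →ₗ[K] P, ∀ j, g (s j) = d j := by
  classical
  obtain ⟨g, hg⟩ := LinearMap.exists_comp_eq_of_ker_le (Fintype.linearCombination K s)
    (Fintype.linearCombination K d) fun α => h α
  refine ⟨g, fun j => ?_⟩
  simpa using LinearMap.congr_fun hg (Pi.single j 1)

section InnerProduct

variable {𝕜 E : Type*} [RCLike 𝕜] [NormedAddCommGroup E] [InnerProductSpace 𝕜 E]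

theorem LinearMap.inner_map_eq_of_mem_span (T : E →ₗ[𝕜] E) {S : Set E}
    (h : ∀ x ∈ S, ∀ y ∈ S, ⟪T x, y⟫_𝕜 = ⟪x, T y⟫_𝕜) {v w : E} (hv : v ∈ span 𝕜 S)
    (hw : w ∈ span 𝕜 S) : ⟪T v, w⟫_𝕜 = ⟪v, T w⟫_𝕜 := by
  induction hv, hw using Submodule.span_induction₂ with
  | mem_mem x y hx hy => exact h x hx y hy
  | zero_left y hy => simp
  | zero_right x hx => simp
  | add_left x y z hx hy hz h1 h2 => simp [inner_add_left, h1, h2]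
  | add_right x y z hx hy hz h1 h2 => simp [inner_add_right, h1, h2]
  | smul_left r x y hx hy h => simp [inner_smul_left, h]
  | smul_right r x y hx hy h => simp [inner_smul_right, h]

theorem exists_isSymmetric_eqOn_of_inner_map_eq [FiniteDimensional 𝕜 E] (V : Submodule 𝕜 E)
    (T : E →ₗ[𝕜] E) (hT : ∀ v ∈ V, ∀ w ∈ V, ⟪T v, w⟫_𝕜 = ⟪v, T w⟫_𝕜) :
    ∃ Q : E →ₗ[𝕜] E, Q.IsSymmetric ∧ ∀ v ∈ V, Q v = T v := by
  let P : E →ₗ[𝕜] E := V.starProjection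
  let A := T ∘ₗ P
  refine ⟨A + A.adjoint ∘ₗ (LinearMap.id - P), fun x y => ?_, fun v hv => ?_⟩
  · simp only [A, P, LinearMap.add_apply, LinearMap.comp_apply, LinearMap.sub_apply,
      LinearMap.id_apply, ContinuousLinearMap.coe_coe, inner_add_left, inner_add_right,
      inner_sub_left, inner_sub_right, LinearMap.adjoint_inner_left,
      LinearMap.adjoint_inner_right]
    rw [hT _ (V.starProjection_apply_mem x) _ (V.starProjection_apply_mem y)]
    ring
  · have hPv : P v = v := starProjection_eq_self_iff.mpr hv
    simp [A, hPv]

end InnerProduct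

/-- Hermitian interpolation lemma: existence of a self-adjoint operator `Q` with
`Q (s j) = d j` for all `j` iff the Gram-type symmetry condition holds and every
linear relation among the `s j` is also a linear relation among the `d j`. -/
theorem hermitian_interpolation
    {E : Type*} [NormedAddCommGroup E] [InnerProductSpace ℂ E]
    [FiniteDimensional ℂ E] {ι : Type*} [Fintype ι] (s d : ι → E) :
    (∃ Q : E →ₗ[ℂ] E, Q.IsSymmetric ∧ ∀ j, Q (s j) = d j) ↔
      ((∀ j k, ⟪s j, d k⟫_ℂ = ⟪d j, s k⟫_ℂ) ∧
        ∀ α : ι → ℂ, ∑ j, α j • s j = 0 → ∑ j, α j • d j = 0) := by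
  constructor
  · rintro ⟨Q, hQ, hQs⟩
    refine ⟨fun j k => by rw [← hQs j, ← hQs k, hQ], fun α hα => ?_⟩
    simpa [hQs, hα] using (map_sum Q (fun j => α j • s j) Finset.univ).symm
  · rintro ⟨hsym, hrel⟩
    obtain ⟨T, hT⟩ := exists_linearMap_apply_eq_of_forall_sum_smul_eq_zero hrel
    have hTS : ∀ x ∈ Set.range s, ∀ y ∈ Set.range s, ⟪T x, y⟫_ℂ = ⟪x, T y⟫_ℂ := by
      rintro _ ⟨j, rfl⟩ _ ⟨k, rfl⟩
      rw [hT, hT, hsym]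
    obtain ⟨Q, hQ, hQT⟩ := exists_isSymmetric_eqOn_of_inner_map_eq (span ℂ (Set.range s)) T
      fun v hv w hw => T.inner_map_eq_of_mem_span hTS hv hw
    exact ⟨Q, hQ, fun j => (hQT _ (subset_span ⟨j, rfl⟩)).trans (hT j)⟩
end

section
/- Let {s_j} be a finite linearly independent family of vectors in a finite-dimensional complex inner product space, and {d_j} a family of the same index set such that the Gram-type matrix g_{jk} = ⟨s_j, d_k⟩ is Hermitian (g_{jk} = conj(g_{kj})). Then there exists a self-adjoint operator Q with Q s_j = d_j for all j. -/
/-!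
Let `S` be the span of the `s j` and `L : S → E` the linear map with `L (s j) = d j`; the
Hermitian condition says exactly that `⟪u, L v⟫ = ⟪L u, v⟫` on `S`. With `P` the orthogonal
projection onto `S` and `T = L ∘ P`, the operator `T + T† - T† P` agrees with `L` on `S`, and
it is self-adjoint because `P T - T† P = 0` is the symmetry of `L` on `S`.
-/

open scoped InnerProductSpace

section

variable {𝕜 E : Type*} [RCLike 𝕜] [NormedAddCommGroup E] [InnerProductSpace 𝕜 E]

theorem inner_coe_map_eq_inner_map_coe_of_basis {ι : Type*} {S : Submodule 𝕜 E}
    (b : Module.Basis ι 𝕜 S) (L : S →ₗ[𝕜] E)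
    (h : ∀ i j, ⟪(b i : E), L (b j)⟫_𝕜 = ⟪L (b i), (b j : E)⟫_𝕜) (u v : S) :
    ⟪(u : E), L v⟫_𝕜 = ⟪L u, (v : E)⟫_𝕜 := by
  have key : ((innerₛₗ 𝕜).comp S.subtype).compl₂ L = ((innerₛₗ 𝕜).comp L).compl₂ S.subtype :=
    LinearMap.ext_basis b b h
  exact LinearMap.congr_fun₂ key u v

theorem LinearMap.exists_isSymmetric_extension [FiniteDimensional 𝕜 E] {S : Submodule 𝕜 E}
    (L : S →ₗ[𝕜] E) (hL : ∀ u v : S, ⟪(u : E), L v⟫_𝕜 = ⟪L u, (v : E)⟫_𝕜) :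
    ∃ Q : E →ₗ[𝕜] E, Q.IsSymmetric ∧ ∀ u : S, Q u = L u := by
  let P : E →ₗ[𝕜] E := S.starProjection
  let T : E →ₗ[𝕜] E := L ∘ₗ (S.orthogonalProjectionOnto : E →ₗ[𝕜] S)
  refine ⟨T + T.adjoint - T.adjoint ∘ₗ P, fun x y => ?_, fun u => ?_⟩
  · have hPT : ⟪P x, T y⟫_𝕜 = ⟪T x, P y⟫_𝕜 := hL _ _
    simp only [LinearMap.sub_apply, LinearMap.add_apply, LinearMap.comp_apply,
      inner_sub_left, inner_add_left, inner_sub_right, inner_add_right,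
      LinearMap.adjoint_inner_left, LinearMap.adjoint_inner_right, hPT]
    ring
  · have hPu : P u = u := S.starProjection_eq_self_iff.2 u.2
    have hTu : T u = L u :=
      congrArg L (S.orthogonalProjectionOnto_mem_subspace_eq_self u)
    simp only [LinearMap.sub_apply, LinearMap.add_apply, LinearMap.comp_apply, hPu, hTu]
    abel

end

theorem hermitian_interpolation_of_linearIndependent_general
    {E : Type*} [NormedAddCommGroup E] [InnerProductSpace ℂ E]
    [FiniteDimensional ℂ E] {ι : Type*} (s d : ι → E)
    (hs : LinearIndependent ℂ s)
    (hg : ∀ j k, ⟪s j, d k⟫_ℂ = starRingEnd ℂ ⟪s k, d j⟫_ℂ) :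
    ∃ Q : E →ₗ[ℂ] E, Q.IsSymmetric ∧ ∀ j, Q (s j) = d j := by
  let b := Module.Basis.span hs
  have hb : ∀ j, (b j : E) = s j := fun j => congrArg Subtype.val (Module.Basis.span_apply hs j)
  let L := b.constr ℂ d
  have hLb : ∀ j, L (b j) = d j := b.constr_basis ℂ d
  have hL := inner_coe_map_eq_inner_map_coe_of_basis b L fun j k => by
    rw [hb, hb, hLb, hLb, hg, inner_conj_symm]
  obtain ⟨Q, hQ, hQL⟩ := L.exists_isSymmetric_extension hL
  exact ⟨Q, hQ, fun j => by rw [← hb, hQL, hLb]⟩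

/-- Sufficiency for linearly independent `s`: if the Gram-type matrix
`g j k = ⟪s j, d k⟫` is Hermitian then a self-adjoint interpolating operator exists. -/
theorem hermitian_interpolation_of_linearIndependent
    {E : Type*} [NormedAddCommGroup E] [InnerProductSpace ℂ E]
    [FiniteDimensional ℂ E] {ι : Type*} [Fintype ι] (s d : ι → E)
    (hs : LinearIndependent ℂ s)
    (hg : ∀ j k, ⟪s j, d k⟫_ℂ = starRingEnd ℂ ⟪s k, d j⟫_ℂ) :
    ∃ Q : E →ₗ[ℂ] E, Q.IsSymmetric ∧ ∀ j, Q (s j) = d j :=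
  hermitian_interpolation_of_linearIndependent_general s d hs hg
end

section
/- With the notation above, for any self-adjoint operator Q on the output space: ∑_j ‖(Q E_j − E_j L_θ)√ρ_θ‖²_HS = F(ρ_θ) − F(𝒩(ρ_θ)) + Tr[(Q − 𝓛_θ)² 𝒩(ρ_θ)], where F(σ_θ) = Tr(σ_θ 𝓛²) for the SLD 𝓛 of σ_θ and ‖A‖_HS = √Tr(A†A). -/
open Matrix
open scoped ComplexOrder
/-- The positive semidefinite square root of a positive semidefinite matrix
(as defined in Mathlib of December 2024, since removed). -/
noncomputable def Matrix.PosSemidef.sqrt {m : Type*} [Fintype m] [DecidableEq m]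
    {𝕜 : Type*} [RCLike 𝕜] {A : Matrix m m 𝕜} (hA : A.PosSemidef) : Matrix m m 𝕜 :=
  hA.1.eigenvectorUnitary.1 * diagonal ((↑) ∘ (√·) ∘ hA.1.eigenvalues) *
  (star hA.1.eigenvectorUnitary : Matrix m m 𝕜)

/-!
Writing `A_j = Q E_j - E_j L`, each summand equals `Tr (A_jᴴ A_j ρ)` because `√ρ` is Hermitian with
square `ρ`. Expanding `A_jᴴ A_j` and moving the Kraus operators around the trace, the sum becomes
`Tr (Q² 𝒩(ρ)) - Tr (Q 𝒩({L, ρ})) + Tr ((∑ E_jᴴ E_j) L ρ L)`. The SLD identity turns the middle term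
into `Tr (Q {𝓛, 𝒩(ρ)})` and trace preservation turns the last one into `F(ρ)`; completing the
square in `Q` around `𝓛` gives the right-hand side.
-/

namespace Matrix

namespace PosSemidef

variable {m 𝕜 : Type*} [Fintype m] [DecidableEq m] [RCLike 𝕜] {A : Matrix m m 𝕜}

theorem isHermitian_sqrt (hA : A.PosSemidef) : hA.sqrt.IsHermitian := by
  simp only [IsHermitian, sqrt, conjTranspose_mul, diagonal_conjTranspose, star_eq_conjTranspose,
    conjTranspose_conjTranspose, Matrix.mul_assoc]
  congr 3
  funext i
  simp

theorem sqrt_mul_self (hA : A.PosSemidef) : hA.sqrt * hA.sqrt = A := by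
  conv_rhs => rw [hA.1.spectral_theorem, Unitary.conjStarAlgAut_apply]
  have hU : (star hA.1.eigenvectorUnitary : Matrix m m 𝕜) * hA.1.eigenvectorUnitary = 1 :=
    Unitary.coe_star_mul_self _
  simp only [sqrt, Matrix.mul_assoc]
  rw [← Matrix.mul_assoc _ hA.1.eigenvectorUnitary.1, hU, Matrix.one_mul,
    ← Matrix.mul_assoc (diagonal _), diagonal_mul_diagonal]
  congr 3
  funext i
  simp only [Function.comp_apply]
  rw [← RCLike.ofReal_mul, Real.mul_self_sqrt (hA.eigenvalues_nonneg i)]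

end PosSemidef

section Trace

variable {m ι R : Type*} [Fintype m] [Fintype ι] [CommRing R]

theorem trace_sub_sq_mul [DecidableEq m] (Q K σ : Matrix m m R) :
    ((Q - K) ^ 2 * σ).trace
      = (Q * Q * σ).trace - (Q * (K * σ + σ * K)).trace + (σ * K ^ 2).trace := by
  have hQK : (Q * (σ * K)).trace = (K * (Q * σ)).trace := by
    rw [trace_mul_comm Q, Matrix.mul_assoc, trace_mul_comm σ, Matrix.mul_assoc]
  have hKK : (σ * (K * K)).trace = (K * (K * σ)).trace := by
    rw [trace_mul_comm σ, Matrix.mul_assoc]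
  simp only [sq, Matrix.sub_mul, Matrix.mul_sub, Matrix.mul_add, trace_add, trace_sub,
    Matrix.mul_assoc, hQK, hKK]
  abel

theorem trace_mul_mul_self [DecidableEq m] (L ρ : Matrix m m R) :
    (L * ρ * L).trace = (ρ * L ^ 2).trace := by
  rw [trace_mul_comm (L * ρ), sq, trace_mul_comm ρ, Matrix.mul_assoc]

variable [StarRing R]

theorem trace_conjTranspose_mul_self_of_isHermitian {S : Matrix m m R} (hS : S.IsHermitian)
    (A : Matrix m m R) : ((A * S)ᴴ * (A * S)).trace = (Aᴴ * A * (S * S)).trace := by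
  rw [conjTranspose_mul, hS.eq, Matrix.mul_assoc, trace_mul_comm]
  simp only [Matrix.mul_assoc]

def krausMap (E : ι → Matrix m m R) (ρ : Matrix m m R) : Matrix m m R :=
  ∑ j, E j * ρ * (E j)ᴴ

variable {Q L : Matrix m m R}

theorem trace_conjTranspose_mul_self_mul_of_isHermitian (hQ : Q.IsHermitian) (hL : L.IsHermitian)
    (E ρ : Matrix m m R) :
    ((Q * E - E * L)ᴴ * (Q * E - E * L) * ρ).trace
      = (Q * Q * (E * ρ * Eᴴ)).trace - (Q * (E * (L * ρ + ρ * L) * Eᴴ)).trace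
        + (Eᴴ * E * (L * ρ * L)).trace := by
  rw [conjTranspose_sub, conjTranspose_mul, conjTranspose_mul, hQ.eq, hL.eq]
  simp only [Matrix.sub_mul, Matrix.mul_sub, Matrix.mul_add, Matrix.add_mul, trace_sub, trace_add,
    Matrix.mul_assoc]
  rw [trace_mul_comm Eᴴ, trace_mul_comm Eᴴ, trace_mul_comm L, trace_mul_comm L]
  simp only [Matrix.mul_assoc]
  rw [trace_mul_comm Eᴴ]
  simp only [Matrix.mul_assoc]
  abel

theorem sum_trace_conjTranspose_mul_self_mul_of_isHermitian (hQ : Q.IsHermitian)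
    (hL : L.IsHermitian) (E : ι → Matrix m m R) (ρ : Matrix m m R) :
    ∑ j, ((Q * E j - E j * L)ᴴ * (Q * E j - E j * L) * ρ).trace
      = (Q * Q * krausMap E ρ).trace - (Q * krausMap E (L * ρ + ρ * L)).trace
        + ((∑ j, (E j)ᴴ * E j) * (L * ρ * L)).trace := by
  simp only [trace_conjTranspose_mul_self_mul_of_isHermitian hQ hL, krausMap, Finset.mul_sum,
    Finset.sum_mul, trace_sum, Finset.sum_add_distrib, Finset.sum_sub_distrib]

end Trace

end Matrix

theorem qfi_loss_identity_general
    {n : ℕ} {ι : Type*} [Fintype ι]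
    (ρ L 𝓛 Q : Matrix (Fin n) (Fin n) ℂ) (hρ : ρ.PosSemidef)
    (hL : L.IsHermitian)
    (hQ : Q.IsHermitian)
    (E : ι → Matrix (Fin n) (Fin n) ℂ)
    (hKraus : ∑ j, (E j)ᴴ * E j = 1)
    (hSLDout : ∑ j, E j * (L * ρ + ρ * L) * (E j)ᴴ
      = 𝓛 * (∑ j, E j * ρ * (E j)ᴴ) + (∑ j, E j * ρ * (E j)ᴴ) * 𝓛) :
    ∑ j, (((Q * E j - E j * L) * hρ.sqrt)ᴴ * ((Q * E j - E j * L) * hρ.sqrt)).trace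
      = (ρ * L ^ 2).trace - ((∑ j, E j * ρ * (E j)ᴴ) * 𝓛 ^ 2).trace
        + ((Q - 𝓛) ^ 2 * (∑ j, E j * ρ * (E j)ᴴ)).trace := by
  calc ∑ j, (((Q * E j - E j * L) * hρ.sqrt)ᴴ * ((Q * E j - E j * L) * hρ.sqrt)).trace
      = ∑ j, ((Q * E j - E j * L)ᴴ * (Q * E j - E j * L) * ρ).trace := by
        simp only [trace_conjTranspose_mul_self_of_isHermitian hρ.isHermitian_sqrt,
          hρ.sqrt_mul_self]
    _ = (Q * Q * krausMap E ρ).trace - (Q * krausMap E (L * ρ + ρ * L)).trace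
          + (L * ρ * L).trace := by
        rw [sum_trace_conjTranspose_mul_self_mul_of_isHermitian hQ hL, hKraus, Matrix.one_mul]
    _ = _ := by
        unfold krausMap
        rw [hSLDout, trace_sub_sq_mul, trace_mul_mul_self]
        ring

/-- Ozawa-type identity: for any self-adjoint `Q` on the output space,
`∑_j ‖(Q E_j − E_j L)√ρ‖²_HS = F(ρ) − F(𝒩(ρ)) + Tr[(Q − 𝓛)² 𝒩(ρ)]`. -/
theorem qfi_loss_identity
    {n : ℕ} {ι : Type*} [Fintype ι]
    (ρ L 𝓛 Q : Matrix (Fin n) (Fin n) ℂ) (hρ : ρ.PosSemidef)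
    (hρtr : ρ.trace = 1) (hL : L.IsHermitian) (h𝓛 : 𝓛.IsHermitian)
    (hQ : Q.IsHermitian)
    (E : ι → Matrix (Fin n) (Fin n) ℂ)
    (hKraus : ∑ j, (E j)ᴴ * E j = 1)
    (hSLDout : ∑ j, E j * (L * ρ + ρ * L) * (E j)ᴴ
      = 𝓛 * (∑ j, E j * ρ * (E j)ᴴ) + (∑ j, E j * ρ * (E j)ᴴ) * 𝓛) :
    ∑ j, (((Q * E j - E j * L) * hρ.sqrt)ᴴ * ((Q * E j - E j * L) * hρ.sqrt)).trace
      = (ρ * L ^ 2).trace - ((∑ j, E j * ρ * (E j)ᴴ) * 𝓛 ^ 2).trace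
        + ((Q - 𝓛) ^ 2 * (∑ j, E j * ρ * (E j)ᴴ)).trace :=
  qfi_loss_identity_general ρ L 𝓛 Q hρ hL hQ E hKraus hSLDout
end

section
/- Direct-sum additivity of quantum Fisher information for a 2-dimensional mixed-state family: for a smooth family of 2×2 density matrices ϱ_ω with det(ϱ_ω) > 0, the quantum Fisher information satisfies F(ϱ_ω) = Tr[(∂_ω ϱ_ω)²] + (1/det ϱ_ω) Tr[(1 − ϱ_ω)(∂_ω ϱ_ω)(1 − ϱ_ω)(∂_ω ϱ_ω)], where F(ϱ_ω) = Tr(ϱ_ω L_ω²) and L_ω is the SLD defined by ∂_ω ϱ_ω = (L_ω ϱ_ω + ϱ_ω L_ω)/2. -/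
/-!
For a `2 × 2` matrix of trace one the adjugate is `1 - ϱ`, so `(1 - ϱ) ϱ = ϱ (1 - ϱ) = det ϱ`.
Sandwiching the SLD equation `dϱ = ½(Lϱ + ϱL)` between two copies of the adjugate therefore gives
`(1 - ϱ) dϱ (1 - ϱ) = det ϱ • (L - dϱ)`, and the second term of the formula collapses to
`Tr(L dϱ) - Tr(dϱ²)`. Finally `Tr(L dϱ) = Tr(ϱ L²)` by cyclicity of the trace.
-/

open Matrix
open scoped ComplexOrder

namespace Matrix

theorem adjugate_fin_two_eq_trace_smul_one_sub {R : Type*} [CommRing R]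
    (A : Matrix (Fin 2) (Fin 2) R) : adjugate A = A.trace • 1 - A := by
  ext i j
  fin_cases i <;> fin_cases j <;> simp [adjugate_fin_two, trace_fin_two]

theorem adjugate_mul_anticommutator_mul_adjugate {n R : Type*} [Fintype n] [DecidableEq n]
    [CommRing R] (A B : Matrix n n R) :
    adjugate A * (B * A + A * B) * adjugate A = A.det • (adjugate A * B + B * adjugate A) := by
  simp only [mul_add, add_mul, Matrix.mul_assoc, mul_adjugate, Matrix.mul_smul, Matrix.mul_one]
  simp only [← Matrix.mul_assoc, adjugate_mul, Matrix.smul_mul, Matrix.one_mul, smul_add]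

variable {K : Type*} [Field K] [NeZero (2 : K)]

theorem trace_mul_sld {n : Type*} [Fintype n] [DecidableEq n] {ϱ L D : Matrix n n K}
    (hD : D = (1 / 2 : K) • (L * ϱ + ϱ * L)) : (L * D).trace = (ϱ * L ^ 2).trace := by
  have hcyc : (L * (ϱ * L)).trace = (ϱ * L ^ 2).trace := by
    rw [trace_mul_comm, Matrix.mul_assoc, pow_two]
  have hcyc' : (L * (L * ϱ)).trace = (ϱ * L ^ 2).trace := by
    rw [← Matrix.mul_assoc, trace_mul_comm, pow_two]
  subst hD
  rw [Matrix.mul_smul, trace_smul, mul_add, trace_add, hcyc, hcyc', smul_eq_mul]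
  field_simp
  ring

theorem one_sub_mul_sld_mul_one_sub {ϱ L D : Matrix (Fin 2) (Fin 2) K} (hϱ : ϱ.trace = 1)
    (hD : D = (1 / 2 : K) • (L * ϱ + ϱ * L)) : (1 - ϱ) * D * (1 - ϱ) = ϱ.det • (L - D) := by
  have hadj : adjugate ϱ = 1 - ϱ := by
    rw [adjugate_fin_two_eq_trace_smul_one_sub, hϱ, one_smul]
  rw [hD, ← hadj, Matrix.mul_smul, Matrix.smul_mul, adjugate_mul_anticommutator_mul_adjugate, hadj]
  simp only [sub_mul, mul_sub, Matrix.one_mul, Matrix.mul_one]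
  match_scalars <;> field_simp
  ring

end Matrix

theorem qfi_two_dim_formula_general
    (ϱ dϱ L : Matrix (Fin 2) (Fin 2) ℂ)
    (hϱ : ϱ.PosDef) (hϱtr : ϱ.trace = 1)
    (hSLD : dϱ = (1/2 : ℂ) • (L * ϱ + ϱ * L)) :
    (ϱ * L ^ 2).trace
      = (dϱ * dϱ).trace
        + (1 / ϱ.det) * ((1 - ϱ) * dϱ * (1 - ϱ) * dϱ).trace := by
  have hdet : ϱ.det ≠ 0 := hϱ.det_pos.ne'
  rw [one_sub_mul_sld_mul_one_sub hϱtr hSLD, smul_mul, trace_smul, sub_mul, trace_sub,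
    trace_mul_sld hSLD, smul_eq_mul]
  field_simp
  ring

/-- Explicit QFI formula for a `2×2` density-matrix family:
`F = Tr[(∂ϱ)²] + (1/det ϱ) Tr[(1 − ϱ)(∂ϱ)(1 − ϱ)(∂ϱ)]`, where `F = Tr(ϱ L²)`
and `L` is the SLD, `∂ϱ = ½(Lϱ + ϱL)`. -/
theorem qfi_two_dim_formula
    (ϱ dϱ L : Matrix (Fin 2) (Fin 2) ℂ)
    (hϱ : ϱ.PosDef) (hϱtr : ϱ.trace = 1)
    (hL : L.IsHermitian)
    (hSLD : dϱ = (1/2 : ℂ) • (L * ϱ + ϱ * L)) :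
    (ϱ * L ^ 2).trace
      = (dϱ * dϱ).trace
        + (1 / ϱ.det) * ((1 - ϱ) * dϱ * (1 - ϱ) * dϱ).trace :=
  qfi_two_dim_formula_general ϱ dϱ L hϱ hϱtr hSLD
end

section
/- For a qubit state of the form ϱ_ω = ½(1 + x cos(ω) σ_x + y sin(ω) σ_y) with constants 0 < |x|, |y| < 1, the quantum Fisher information is F(ϱ_ω) = 1 − 2(1 − x²)(1 − y²) / (2 − x² − y² + (y² − x²) cos(2ω)). -/
/-!
Write `ϱ = ½(1 + r·σ)` and `∂_ω ϱ = ½ d·σ` with real Bloch vectors `r, d`. Cyclicity of the trace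
turns the SLD equation into `F = Tr(ϱ L²) = Tr(∂_ω ϱ · L)`, and tracing the SLD equation against
`1`, `r·σ` and `d·σ` (using `{u·σ, v·σ} = 2 (u ⬝ v)`) gives three linear equations for `Tr L`,
`Tr(L r·σ)` and `Tr(L d·σ)`. Solving them yields the qubit formula
`F = |d|² + (r ⬝ d)² / (1 - |r|²)`. For `r = (x cos ω, y sin ω, 0)` and `d = ∂_ω r` one has
`|r|² + |d|² = x² + y²` and, by Lagrange's identity, `|r|² |d|² - (r ⬝ d)² = x² y²`, so
`F = 1 - (1 - x²)(1 - y²) / (1 - |r|²)`.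
-/

open Matrix Complex

section Trace

variable {n : Type*} [Fintype n]

lemma Matrix.trace_anticomm_mul {R : Type*} [CommRing R] (L A M : Matrix n n R) :
    ((L * A + A * L) * M).trace = (L * (A * M + M * A)).trace := by
  rw [add_mul, mul_add, trace_add, trace_add, Matrix.mul_assoc, Matrix.mul_assoc,
    trace_mul_comm A, Matrix.mul_assoc]

lemma Matrix.trace_mul_sq_eq_of_sld [DecidableEq n] {𝕜 : Type*} [Field 𝕜] [NeZero (2 : 𝕜)]
    {ϱ dϱ L : Matrix n n 𝕜} (hSLD : dϱ = (1 / 2 : 𝕜) • (L * ϱ + ϱ * L)) :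
    (ϱ * L ^ 2).trace = (dϱ * L).trace := by
  rw [hSLD, smul_mul, trace_smul, add_mul, trace_add, Matrix.mul_assoc, trace_mul_comm L, sq,
    Matrix.mul_assoc, smul_eq_mul, ← two_mul, one_div, inv_mul_cancel_left₀ two_ne_zero]

end Trace

namespace Qubit

def pauli : Fin 3 → Matrix (Fin 2) (Fin 2) ℂ :=
  ![!![0, 1; 1, 0], !![0, -I; I, 0], !![1, 0; 0, -1]]

def pauliVec (v : Fin 3 → ℝ) : Matrix (Fin 2) (Fin 2) ℂ := ∑ i, (v i : ℂ) • pauli i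

lemma trace_pauliVec (v : Fin 3 → ℝ) : (pauliVec v).trace = 0 := by
  simp [pauliVec, pauli, Fin.sum_univ_three, trace_fin_two]

lemma pauliVec_mul_add_mul (u v : Fin 3 → ℝ) :
    pauliVec u * pauliVec v + pauliVec v * pauliVec u = ((2 * (u ⬝ᵥ v) : ℝ) : ℂ) • 1 := by
  ext i j
  fin_cases i <;> fin_cases j <;>
    simp [pauliVec, pauli, Fin.sum_univ_three, dotProduct] <;> ring_nf <;> simp [I_sq]

lemma trace_pauliVec_mul (u v : Fin 3 → ℝ) :
    (pauliVec u * pauliVec v).trace = 2 * (u ⬝ᵥ v : ℝ) := by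
  have h := congrArg trace (pauliVec_mul_add_mul u v)
  rw [trace_add, trace_mul_comm (pauliVec v), trace_smul, trace_one] at h
  simp only [Fintype.card_fin, Nat.cast_ofNat, ofReal_mul, ofReal_ofNat, smul_eq_mul] at h
  linear_combination h / 2

section SLD

variable {ϱ dϱ L : Matrix (Fin 2) (Fin 2) ℂ} {r d : Fin 3 → ℝ}

lemma trace_pauliVec_mul_of_sld (hϱ : ϱ = (1 / 2 : ℂ) • (1 + pauliVec r))
    (hdϱ : dϱ = (1 / 2 : ℂ) • pauliVec d) (hSLD : dϱ = (1 / 2 : ℂ) • (L * ϱ + ϱ * L))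
    (M : Matrix (Fin 2) (Fin 2) ℂ) :
    (pauliVec d * M).trace
      = (L * M).trace + (1 / 2 : ℂ) * (L * (pauliVec r * M + M * pauliVec r)).trace := by
  have hD : pauliVec d = L + (1 / 2 : ℂ) • (L * pauliVec r + pauliVec r * L) := by
    have h2 : pauliVec d = (2 : ℂ) • dϱ := by rw [hdϱ, smul_smul]; norm_num
    rw [h2, hSLD, hϱ, Matrix.mul_smul, Matrix.smul_mul, mul_add, add_mul, Matrix.mul_one,
      Matrix.one_mul]
    module
  rw [hD, add_mul, trace_add, smul_mul, trace_smul, Matrix.trace_anticomm_mul, smul_eq_mul]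

theorem trace_mul_sq_of_sld (hϱ : ϱ = (1 / 2 : ℂ) • (1 + pauliVec r))
    (hdϱ : dϱ = (1 / 2 : ℂ) • pauliVec d) (hSLD : dϱ = (1 / 2 : ℂ) • (L * ϱ + ϱ * L))
    (hr : r ⬝ᵥ r ≠ 1) :
    (ϱ * L ^ 2).trace = ((d ⬝ᵥ d + (r ⬝ᵥ d) ^ 2 / (1 - r ⬝ᵥ r) : ℝ) : ℂ) := by
  have h1 := trace_pauliVec_mul_of_sld hϱ hdϱ hSLD 1
  have hR := trace_pauliVec_mul_of_sld hϱ hdϱ hSLD (pauliVec r)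
  have hD := trace_pauliVec_mul_of_sld hϱ hdϱ hSLD (pauliVec d)
  rw [pauliVec_mul_add_mul] at hR hD
  simp only [Matrix.mul_one, Matrix.one_mul, ← two_smul ℂ (pauliVec r), Matrix.mul_smul,
    trace_smul, smul_eq_mul, trace_pauliVec, trace_pauliVec_mul] at h1 hR hD
  rw [Matrix.trace_mul_sq_eq_of_sld hSLD, hdϱ, smul_mul, trace_smul, trace_mul_comm, smul_eq_mul]
  have hr' : (1 - ((r ⬝ᵥ r : ℝ) : ℂ)) ≠ 0 := by exact_mod_cast sub_ne_zero.mpr hr.symm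
  rw [dotProduct_comm d r] at hR
  push_cast at hR hD ⊢
  field_simp
  linear_combination -(1 - ((r ⬝ᵥ r : ℝ) : ℂ)) * hD - ((r ⬝ᵥ d : ℝ) : ℂ) * (hR - h1)

end SLD

end Qubit

lemma sq_mul_sq_add_sq_mul_sq_lt_one {x y c s : ℝ} (hx : |x| < 1) (hy : |y| < 1)
    (hcs : c ^ 2 + s ^ 2 = 1) : x ^ 2 * c ^ 2 + y ^ 2 * s ^ 2 < 1 := by
  have hx2 := (sq_lt_one_iff_abs_lt_one x).mpr hx
  have hy2 := (sq_lt_one_iff_abs_lt_one y).mpr hy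
  nlinarith [mul_pos (sub_pos.2 hx2) (sub_pos.2 hy2),
    mul_nonneg (mul_nonneg (sub_nonneg.2 hx2.le) (sq_nonneg c)) (sq_nonneg y),
    mul_nonneg (mul_nonneg (sub_nonneg.2 hy2.le) (sq_nonneg s)) (sq_nonneg x)]

theorem qfi_qubit_family_general
    (x y ω : ℝ) (hx1 : |x| < 1) (hy1 : |y| < 1)
    (σx σy ϱ dϱ L : Matrix (Fin 2) (Fin 2) ℂ)
    (hσx : σx = !![0, 1; 1, 0])
    (hσy : σy = !![0, -Complex.I; Complex.I, 0])
    (hϱ : ϱ = (1/2 : ℂ) • (1 + ((x * Real.cos ω : ℝ) : ℂ) • σx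
        + ((y * Real.sin ω : ℝ) : ℂ) • σy))
    (hdϱ : dϱ = (1/2 : ℂ) • (((-(x * Real.sin ω) : ℝ) : ℂ) • σx
        + ((y * Real.cos ω : ℝ) : ℂ) • σy))
    (hSLD : dϱ = (1/2 : ℂ) • (L * ϱ + ϱ * L)) :
    (ϱ * L ^ 2).trace
      = ((1 - 2 * (1 - x ^ 2) * (1 - y ^ 2)
          / (2 - x ^ 2 - y ^ 2 + (y ^ 2 - x ^ 2) * Real.cos (2 * ω)) : ℝ) : ℂ) := by
  set r : Fin 3 → ℝ := ![x * Real.cos ω, y * Real.sin ω, 0]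
  set d : Fin 3 → ℝ := ![-(x * Real.sin ω), y * Real.cos ω, 0]
  have hϱ' : ϱ = (1 / 2 : ℂ) • (1 + Qubit.pauliVec r) := by
    simp [hϱ, hσx, hσy, r, Qubit.pauliVec, Qubit.pauli, Fin.sum_univ_three, add_assoc]
  have hdϱ' : dϱ = (1 / 2 : ℂ) • Qubit.pauliVec d := by
    simp [hdϱ, hσx, hσy, d, Qubit.pauliVec, Qubit.pauli, Fin.sum_univ_three]
  have hcs := Real.cos_sq_add_sin_sq ω
  have hrr : r ⬝ᵥ r = x ^ 2 * Real.cos ω ^ 2 + y ^ 2 * Real.sin ω ^ 2 := by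
    simp only [r, cons_dotProduct_cons, dotProduct_of_isEmpty]; ring
  have hsum : r ⬝ᵥ r + d ⬝ᵥ d = x ^ 2 + y ^ 2 := by
    simp only [r, d, cons_dotProduct_cons, dotProduct_of_isEmpty]
    linear_combination (x ^ 2 + y ^ 2) * hcs
  have hlagrange : r ⬝ᵥ r * d ⬝ᵥ d - (r ⬝ᵥ d) ^ 2 = x ^ 2 * y ^ 2 := by
    simp only [r, d, cons_dotProduct_cons, dotProduct_of_isEmpty]
    linear_combination x ^ 2 * y ^ 2 * (Real.cos ω ^ 2 + Real.sin ω ^ 2 + 1) * hcs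
  have hden : 2 - x ^ 2 - y ^ 2 + (y ^ 2 - x ^ 2) * Real.cos (2 * ω) = 2 * (1 - r ⬝ᵥ r) := by
    rw [hrr, Real.cos_two_mul]; linear_combination 2 * y ^ 2 * hcs
  have hr : r ⬝ᵥ r < 1 := hrr ▸ sq_mul_sq_add_sq_mul_sq_lt_one hx1 hy1 hcs
  rw [Qubit.trace_mul_sq_of_sld hϱ' hdϱ' hSLD hr.ne, hden]
  congr 1
  have : 1 - r ⬝ᵥ r ≠ 0 := by linarith
  field_simp
  linear_combination hsum - hlagrange

/-- QFI of the qubit family `ϱ_ω = ½(1 + x cos ω σ_x + y sin ω σ_y)`: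
`F = 1 − 2(1−x²)(1−y²)/(2 − x² − y² + (y² − x²) cos 2ω)`. -/
theorem qfi_qubit_family
    (x y ω : ℝ) (hx0 : 0 < |x|) (hx1 : |x| < 1) (hy0 : 0 < |y|) (hy1 : |y| < 1)
    (σx σy ϱ dϱ L : Matrix (Fin 2) (Fin 2) ℂ)
    (hσx : σx = !![0, 1; 1, 0])
    (hσy : σy = !![0, -Complex.I; Complex.I, 0])
    (hϱ : ϱ = (1/2 : ℂ) • (1 + ((x * Real.cos ω : ℝ) : ℂ) • σx
        + ((y * Real.sin ω : ℝ) : ℂ) • σy))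
    (hdϱ : dϱ = (1/2 : ℂ) • (((-(x * Real.sin ω) : ℝ) : ℂ) • σx
        + ((y * Real.cos ω : ℝ) : ℂ) • σy))
    (hL : L.IsHermitian)
    (hSLD : dϱ = (1/2 : ℂ) • (L * ϱ + ϱ * L)) :
    (ϱ * L ^ 2).trace
      = ((1 - 2 * (1 - x ^ 2) * (1 - y ^ 2)
          / (2 - x ^ 2 - y ^ 2 + (y ^ 2 - x ^ 2) * Real.cos (2 * ω)) : ℝ) : ℂ) :=
  qfi_qubit_family_general x y ω hx1 hy1 σx σy ϱ dϱ L hσx hσy hϱ hdϱ hSLD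
end
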